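/- arXiv:2510.25350 — 7 statements merged into one kernel-verified Lean document; each statement's English description precedes it below -/
import Mathlib

section
/- Let q ∈ K be invertible and not a root of unity. Let A be the unital K-algebra generated by X, Y, Z with relations XZ = q^2 ZX, ZY = q^2 YZ, XY + q^2 Z^2 = 1, YX + q^{-2} Z^2 = 1. Define b_{n,m} = Y^n Z^m for n ≥ 0 and b_{n,m} = X^{-n} Z^m for n < 0 (m ≥ 0). Then the family (b_{n,m}) indexed by n ∈ ℤ, m ∈ ℤ_{≥0} is a K-basis of A. -/
open FreeAlgebra in
/-- Relations: with `X = ι 0`, `Y = ι 1`, `Z = ι 2`,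
`XZ = q²ZX`, `ZY = q²YZ`, `XY + q²Z² = 1`, `YX + q⁻²Z² = 1`. -/
inductive QRel (K : Type) [Field K] (q : K) :
    FreeAlgebra K (Fin 3) → FreeAlgebra K (Fin 3) → Prop
  | xz : QRel K q (ι K 0 * ι K 2) (q ^ 2 • (ι K 2 * ι K 0))
  | zy : QRel K q (ι K 2 * ι K 1) (q ^ 2 • (ι K 1 * ι K 2))
  | unit1 : QRel K q (ι K 0 * ι K 1 + q ^ 2 • (ι K 2 * ι K 2)) 1
  | unit2 : QRel K q (ι K 1 * ι K 0 + (q ^ 2)⁻¹ • (ι K 2 * ι K 2)) 1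

/-!
The monomials `b_{n,m}` span `A`: their span contains `1 = b_{0,0}` and is stable under left
multiplication by `X`, `Y` and `Z`, since the relations rewrite `X b_{n,m}`, `Y b_{n,m}` and
`Z b_{n,m}` as combinations of monomials. For linear independence, let `A` act on the free
module with basis `e_{n,m}` by the operators that left multiplication would induce if the
`b_{n,m}` were a basis; the four relations hold for these operators, and `b_{n,m}` maps
`e_{0,0}` to `e_{n,m}`.
-/

theorem mul_pow_eq_smul_pow_mul {R A : Type*} [Monoid R] [Monoid A] [MulAction R A]
    [IsScalarTower R A A] [SMulCommClass R A A] {a b : A} {r : R} (h : a * b = r • (b * a))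
    (k : ℕ) : a * b ^ k = r ^ k • (b ^ k * a) := by
  induction k with
  | zero => simp
  | succ k ih =>
    rw [pow_succ, ← mul_assoc, ih, smul_mul_assoc, mul_assoc, h, mul_smul_comm, smul_smul,
      ← pow_succ, ← mul_assoc, ← pow_succ]

theorem mul_mem_span_of_forall_mem {R A : Type*} [CommSemiring R] [Semiring A] [Algebra R A]
    {s : Set A} {a : A} (h : ∀ x ∈ s, a * x ∈ Submodule.span R s) {y : A}
    (hy : y ∈ Submodule.span R s) : a * y ∈ Submodule.span R s :=
  Submodule.span_le (p := (Submodule.span R s).comap (LinearMap.mulLeft R a)) |>.2 h hy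

namespace QRel

open Finsupp

section Model

variable {K : Type} [Field K] (t : K)

noncomputable def coeffY (n : ℤ) : K := if 0 ≤ n then 0 else t ^ (2 * n + 1)

noncomputable def coeffX (n : ℤ) : K := if n ≤ 0 then 0 else t ^ (2 * n - 1)

lemma coeffY_add_coeffX {k n : ℤ} (h : k + 1 = n) :
    coeffY t k + coeffX t n = t ^ (2 * k + 1) := by
  subst h
  unfold coeffY coeffX
  split_ifs <;> first | omega | ring_nf

lemma coeffY_mul_coeffX {k n : ℤ} (h : k + 1 = n) : coeffY t k * coeffX t n = 0 := by
  unfold coeffY coeffX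
  split_ifs <;> first | omega | simp

/- With `t = q ^ 2`, these are left multiplication by `Z`, `Y`, `X` in the monomials `b_{n,m}`;
e.g. `Y X ^ (k + 1) Z ^ m = X ^ k Z ^ m - t⁻¹ Z ^ 2 X ^ k Z ^ m` produces `coeffY`. -/
noncomputable def opZ : Module.End K ((ℤ × ℕ) →₀ K) :=
  linearCombination K fun p => t ^ p.1 • single (p.1, p.2 + 1) 1

noncomputable def opY : Module.End K ((ℤ × ℕ) →₀ K) :=
  linearCombination K fun p =>
    single (p.1 + 1, p.2) 1 - coeffY t p.1 • single (p.1 + 1, p.2 + 2) 1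

noncomputable def opX : Module.End K ((ℤ × ℕ) →₀ K) :=
  linearCombination K fun p =>
    single (p.1 - 1, p.2) 1 - coeffX t p.1 • single (p.1 - 1, p.2 + 2) 1

@[simp] lemma opZ_single (n : ℤ) (m : ℕ) :
    opZ t (single (n, m) 1) = t ^ n • single (n, m + 1) 1 := by
  simp [opZ]

@[simp] lemma opY_single (n : ℤ) (m : ℕ) :
    opY t (single (n, m) 1) = single (n + 1, m) 1 - coeffY t n • single (n + 1, m + 2) 1 := by
  simp [opY]

@[simp] lemma opX_single (n : ℤ) (m : ℕ) :
    opX t (single (n, m) 1) = single (n - 1, m) 1 - coeffX t n • single (n - 1, m + 2) 1 := by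
  simp [opX]

lemma end_ext_single {f g : Module.End K ((ℤ × ℕ) →₀ K)}
    (h : ∀ n m, f (single (n, m) 1) = g (single (n, m) 1)) : f = g :=
  Finsupp.basisSingleOne.ext fun p => by simpa using h p.1 p.2

variable {t}

lemma opX_mul_opZ (ht : t ≠ 0) : opX t * opZ t = t • (opZ t * opX t) := by
  refine end_ext_single fun n m => ?_
  simp only [Module.End.mul_apply, LinearMap.smul_apply, opZ_single, opX_single, map_smul,
    map_sub, smul_sub, smul_smul]
  match_scalars
  · rw [zpow_sub_one₀ ht]; field_simp
  · rw [zpow_sub_one₀ ht]; field_simp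

lemma opZ_mul_opY (ht : t ≠ 0) : opZ t * opY t = t • (opY t * opZ t) := by
  refine end_ext_single fun n m => ?_
  simp only [Module.End.mul_apply, LinearMap.smul_apply, opZ_single, opY_single, map_smul,
    map_sub, smul_sub, smul_smul]
  match_scalars
  · rw [zpow_add_one₀ ht]; ring
  · rw [zpow_add_one₀ ht]; ring

lemma opX_mul_opY_add (ht : t ≠ 0) : opX t * opY t + t • (opZ t * opZ t) = 1 := by
  refine end_ext_single fun n m => ?_
  simp only [Module.End.mul_apply, LinearMap.add_apply, LinearMap.smul_apply,
    Module.End.one_apply, opZ_single, opY_single, opX_single, map_smul, map_sub, smul_sub,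
    smul_smul, add_sub_cancel_right]
  have hsum := coeffY_add_coeffX t (rfl : n + 1 = n + 1)
  have hprod := coeffY_mul_coeffX t (rfl : n + 1 = n + 1)
  have hpow : t * (t ^ n * t ^ n) = t ^ (2 * n + 1) := by
    rw [← zpow_add₀ ht, ← zpow_one_add₀ ht]; ring_nf
  match_scalars
  · ring
  · linear_combination hpow - hsum
  · linear_combination hprod

lemma opY_mul_opX_add (ht : t ≠ 0) : opY t * opX t + t⁻¹ • (opZ t * opZ t) = 1 := by
  refine end_ext_single fun n m => ?_
  simp only [Module.End.mul_apply, LinearMap.add_apply, LinearMap.smul_apply,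
    Module.End.one_apply, opZ_single, opY_single, opX_single, map_smul, map_sub, smul_sub,
    smul_smul, sub_add_cancel]
  have hsum := coeffY_add_coeffX t (sub_add_cancel n 1)
  have hprod := coeffY_mul_coeffX t (sub_add_cancel n 1)
  have hpow : t⁻¹ * (t ^ n * t ^ n) = t ^ (2 * (n - 1) + 1) := by
    rw [← zpow_add₀ ht, ← zpow_neg_one, ← zpow_add₀ ht]; ring_nf
  match_scalars
  · ring
  · linear_combination hpow - hsum
  · linear_combination hprod

lemma opZ_pow_single_zero (m : ℕ) : (opZ t ^ m) (single (0, 0) 1) = single (0, m) 1 := by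
  induction m with
  | zero => simp
  | succ m ih => rw [pow_succ', Module.End.mul_apply, ih, opZ_single, zpow_zero, one_smul]

lemma opY_pow_single {n : ℤ} (hn : 0 ≤ n) (m k : ℕ) :
    (opY t ^ k) (single (n, m) 1) = single (n + k, m) 1 := by
  induction k with
  | zero => simp
  | succ k ih =>
    rw [pow_succ', Module.End.mul_apply, ih, opY_single, coeffY, if_pos (by omega), zero_smul,
      sub_zero, Nat.cast_succ, add_assoc]

lemma opX_pow_single {n : ℤ} (hn : n ≤ 0) (m k : ℕ) :
    (opX t ^ k) (single (n, m) 1) = single (n - k, m) 1 := by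
  induction k with
  | zero => simp
  | succ k ih =>
    rw [pow_succ', Module.End.mul_apply, ih, opX_single, coeffX, if_pos (by omega), zero_smul,
      sub_zero, Nat.cast_succ, sub_add_eq_sub_sub]

end Model

section Algebra

variable {K : Type} [Field K] (q : K)

noncomputable def X : RingQuot (QRel K q) := RingQuot.mkAlgHom K _ (FreeAlgebra.ι K 0)

noncomputable def Y : RingQuot (QRel K q) := RingQuot.mkAlgHom K _ (FreeAlgebra.ι K 1)

noncomputable def Z : RingQuot (QRel K q) := RingQuot.mkAlgHom K _ (FreeAlgebra.ι K 2)

lemma X_mul_Z : X q * Z q = q ^ 2 • (Z q * X q) := by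
  simpa [X, Y, Z] using RingQuot.mkAlgHom_rel K (QRel.xz (q := q))

lemma Z_mul_Y : Z q * Y q = q ^ 2 • (Y q * Z q) := by
  simpa [X, Y, Z] using RingQuot.mkAlgHom_rel K (QRel.zy (q := q))

lemma X_mul_Y : X q * Y q = 1 - q ^ 2 • (Z q * Z q) := by
  rw [eq_sub_iff_add_eq]
  simpa [X, Y, Z] using RingQuot.mkAlgHom_rel K (QRel.unit1 (q := q))

lemma Y_mul_X : Y q * X q = 1 - (q ^ 2)⁻¹ • (Z q * Z q) := by
  rw [eq_sub_iff_add_eq]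
  simpa [X, Y, Z] using RingQuot.mkAlgHom_rel K (QRel.unit2 (q := q))

noncomputable def monomial (p : ℤ × ℕ) : RingQuot (QRel K q) :=
  (if 0 ≤ p.1 then Y q ^ p.1.toNat else X q ^ (-p.1).toNat) * Z q ^ p.2

lemma monomial_natCast (k m : ℕ) : monomial q (k, m) = Y q ^ k * Z q ^ m := by
  simp [monomial]

lemma monomial_negSucc (k m : ℕ) : monomial q (Int.negSucc k, m) = X q ^ (k + 1) * Z q ^ m := by
  rw [monomial, if_neg (Int.negSucc_lt_zero k).not_ge, Int.neg_negSucc, Int.toNat_natCast]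

lemma monomial_zero_zero : monomial q (0, 0) = 1 := by
  simp [monomial]

variable {q}

lemma Z_mul_X (hq : q ≠ 0) : Z q * X q = (q ^ 2)⁻¹ • (X q * Z q) := by
  rw [X_mul_Z, inv_smul_smul₀ (pow_ne_zero 2 hq)]

local notation "𝓑" => Submodule.span K (Set.range (monomial q))

lemma Y_pow_mul_Z_pow_mem (k m : ℕ) : Y q ^ k * Z q ^ m ∈ 𝓑 :=
  monomial_natCast q k m ▸ Submodule.subset_span ⟨_, rfl⟩

lemma X_pow_mul_Z_pow_mem (k m : ℕ) : X q ^ k * Z q ^ m ∈ 𝓑 := by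
  cases k with
  | zero => simpa using Y_pow_mul_Z_pow_mem (q := q) 0 m
  | succ k => exact monomial_negSucc q k m ▸ Submodule.subset_span ⟨_, rfl⟩

lemma Z_mul_mem (hq : q ≠ 0) {a : RingQuot (QRel K q)} (ha : a ∈ 𝓑) : Z q * a ∈ 𝓑 := by
  refine mul_mem_span_of_forall_mem ?_ ha
  rintro _ ⟨⟨n | k, m⟩, rfl⟩
  · rw [Int.ofNat_eq_natCast, monomial_natCast, ← mul_assoc, mul_pow_eq_smul_pow_mul (Z_mul_Y q),
      smul_mul_assoc, mul_assoc, ← pow_succ']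
    exact Submodule.smul_mem _ _ (Y_pow_mul_Z_pow_mem _ _)
  · rw [monomial_negSucc, ← mul_assoc, mul_pow_eq_smul_pow_mul (Z_mul_X hq),
      smul_mul_assoc, mul_assoc, ← pow_succ']
    exact Submodule.smul_mem _ _ (X_pow_mul_Z_pow_mem _ _)

lemma Y_mul_mem (hq : q ≠ 0) {a : RingQuot (QRel K q)} (ha : a ∈ 𝓑) : Y q * a ∈ 𝓑 := by
  refine mul_mem_span_of_forall_mem ?_ ha
  rintro _ ⟨⟨n | k, m⟩, rfl⟩
  · rw [Int.ofNat_eq_natCast, monomial_natCast, ← mul_assoc, ← pow_succ']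
    exact Y_pow_mul_Z_pow_mem _ _
  · have hYX : Y q * (X q ^ (k + 1) * Z q ^ m) =
        X q ^ k * Z q ^ m - (q ^ 2)⁻¹ • (Z q * (Z q * (X q ^ k * Z q ^ m))) := by
      rw [pow_succ', mul_assoc, ← mul_assoc (Y q), Y_mul_X, sub_mul, one_mul, smul_mul_assoc,
        mul_assoc]
    rw [monomial_negSucc, hYX]
    have hmem := X_pow_mul_Z_pow_mem (q := q) k m
    exact sub_mem hmem (Submodule.smul_mem _ _ (Z_mul_mem hq (Z_mul_mem hq hmem)))

lemma X_mul_mem (hq : q ≠ 0) {a : RingQuot (QRel K q)} (ha : a ∈ 𝓑) : X q * a ∈ 𝓑 := by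
  refine mul_mem_span_of_forall_mem ?_ ha
  rintro _ ⟨⟨(_ | k) | k, m⟩, rfl⟩
  · simpa [monomial] using X_pow_mul_Z_pow_mem (q := q) 1 m
  · have hXY : X q * (Y q ^ (k + 1) * Z q ^ m) =
        Y q ^ k * Z q ^ m - q ^ 2 • (Z q * (Z q * (Y q ^ k * Z q ^ m))) := by
      rw [pow_succ', mul_assoc, ← mul_assoc (X q), X_mul_Y, sub_mul, one_mul, smul_mul_assoc,
        mul_assoc]
    rw [Int.ofNat_eq_natCast, monomial_natCast, hXY]
    have hmem := Y_pow_mul_Z_pow_mem (q := q) k m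
    exact sub_mem hmem (Submodule.smul_mem _ _ (Z_mul_mem hq (Z_mul_mem hq hmem)))
  · rw [monomial_negSucc, ← mul_assoc, ← pow_succ']
    exact X_pow_mul_Z_pow_mem _ _

theorem span_monomial (hq : q ≠ 0) : 𝓑 = ⊤ := by
  rw [eq_top_iff]
  rintro a -
  obtain ⟨x, rfl⟩ := RingQuot.mkAlgHom_surjective K (QRel K q) a
  suffices ∀ s ∈ 𝓑, RingQuot.mkAlgHom K (QRel K q) x * s ∈ 𝓑 by
    simpa using this 1 (monomial_zero_zero q ▸ Submodule.subset_span ⟨_, rfl⟩)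
  induction x using FreeAlgebra.induction with
  | grade0 r =>
    intro s hs
    rw [AlgHom.commutes, Algebra.algebraMap_eq_smul_one, smul_one_mul]
    exact Submodule.smul_mem _ _ hs
  | grade1 i =>
    fin_cases i
    exacts [fun _ => X_mul_mem hq, fun _ => Y_mul_mem hq, fun _ => Z_mul_mem hq]
  | mul x y hx hy =>
    intro s hs
    rw [map_mul, mul_assoc]
    exact hx _ (hy s hs)
  | add x y hx hy =>
    intro s hs
    rw [map_add, add_mul]
    exact add_mem (hx s hs) (hy s hs)

end Algebra

section Representation

variable {K : Type} [Field K] {q : K}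

noncomputable def normalFormRep (hq : q ≠ 0) :
    RingQuot (QRel K q) →ₐ[K] Module.End K ((ℤ × ℕ) →₀ K) :=
  RingQuot.liftAlgHom K ⟨FreeAlgebra.lift K ![opX (q ^ 2), opY (q ^ 2), opZ (q ^ 2)], by
    have ht := pow_ne_zero 2 hq
    rintro _ _ ⟨⟩ <;> simp only [map_mul, map_add, map_smul, map_one, FreeAlgebra.lift_ι_apply]
    exacts [opX_mul_opZ ht, opZ_mul_opY ht, opX_mul_opY_add ht, opY_mul_opX_add ht]⟩

lemma normalFormRep_X (hq : q ≠ 0) : normalFormRep hq (X q) = opX (q ^ 2) := by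
  simp [normalFormRep, X]

lemma normalFormRep_Y (hq : q ≠ 0) : normalFormRep hq (Y q) = opY (q ^ 2) := by
  simp [normalFormRep, Y]

lemma normalFormRep_Z (hq : q ≠ 0) : normalFormRep hq (Z q) = opZ (q ^ 2) := by
  simp [normalFormRep, Z]

lemma normalFormRep_monomial_single_zero (hq : q ≠ 0) (p : ℤ × ℕ) :
    normalFormRep hq (monomial q p) (single (0, 0) 1) = single p 1 := by
  obtain ⟨n | k, m⟩ := p
  · rw [Int.ofNat_eq_natCast, monomial_natCast, map_mul, map_pow, map_pow, normalFormRep_Y,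
      normalFormRep_Z, Module.End.mul_apply, opZ_pow_single_zero, opY_pow_single le_rfl, zero_add]
  · rw [monomial_negSucc, map_mul, map_pow, map_pow, normalFormRep_X, normalFormRep_Z,
      Module.End.mul_apply, opZ_pow_single_zero, opX_pow_single le_rfl, Int.negSucc_eq]
    push_cast
    ring_nf

theorem linearIndependent_monomial (hq : q ≠ 0) : LinearIndependent K (monomial q) := by
  refine .of_comp ((LinearMap.applyₗ (single (0, 0) 1)).comp (normalFormRep hq).toLinearMap) ?_
  convert linearIndependent_single_one (R := K) (ι := ℤ × ℕ) using 1
  exact funext (normalFormRep_monomial_single_zero hq)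

end Representation

end QRel

theorem stmt2_general (K : Type) [Field K] (q : K) (hq0 : q ≠ 0) :
    letI A := RingQuot (QRel K q)
    letI X : A := RingQuot.mkAlgHom K _ (FreeAlgebra.ι K 0)
    letI Y : A := RingQuot.mkAlgHom K _ (FreeAlgebra.ι K 1)
    letI Z : A := RingQuot.mkAlgHom K _ (FreeAlgebra.ι K 2)
    ∃ b : Module.Basis (ℤ × ℕ) K A, ∀ (n : ℤ) (m : ℕ),
      b (n, m) = (if 0 ≤ n then Y ^ n.toNat else X ^ (-n).toNat) * Z ^ m :=
  ⟨.mk (QRel.linearIndependent_monomial hq0) (QRel.span_monomial hq0).ge,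
    fun _ _ => Module.Basis.mk_apply _ _ _⟩

/-- the family `b_{n,m} = Y^n Z^m` (`n ≥ 0`), `b_{n,m} = X^{-n} Z^m`
(`n < 0`), indexed by `(n, m) ∈ ℤ × ℕ`, is a `K`-basis of the presented algebra. -/
theorem stmt2 (K : Type) [Field K] (q : K) (hq0 : q ≠ 0)
    (hq : ∀ n : ℕ, 0 < n → q ^ n ≠ 1) :
    letI A := RingQuot (QRel K q)
    letI X : A := RingQuot.mkAlgHom K _ (FreeAlgebra.ι K 0)
    letI Y : A := RingQuot.mkAlgHom K _ (FreeAlgebra.ι K 1)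
    letI Z : A := RingQuot.mkAlgHom K _ (FreeAlgebra.ι K 2)
    ∃ b : Module.Basis (ℤ × ℕ) K A, ∀ (n : ℤ) (m : ℕ),
      b (n, m) = (if 0 ≤ n then Y ^ n.toNat else X ^ (-n).toNat) * Z ^ m :=
  stmt2_general K q hq0
end

section
/- Let R be a unital commutative ring with 2 invertible and q ∈ R× with q = 1. Then the algebra U(1,R) generated by θ, x, y, z subject to the relations qxθ − q^{-1}θx = qθy − q^{-1}yθ = [2]_q z − θ, θz − zθ = y − x, qzx − q^{-1}xz = qyz − q^{-1}zy = −z, xy + q^2 z^2 = yx + q^{-2} z^2, and x + y + (q − q^{-1})(xy + q^2 z^2) = 0, is isomorphic to the universal enveloping algebra of sl₂(R). -/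
/-!
At `q = 1` the last relation says `y = -x`, and the others make
`(h, e, f) = (2x, z, θ - z)` an `sl₂`-triple, so the universal property of the enveloping
algebra gives a map `U(sl₂) → U(1,R)`. Conversely, when `2` is invertible, the images of
`θ, x, y, z` under `e + f, h/2, -h/2, e` satisfy the defining relations, which gives a map
`U(1,R) → U(sl₂)`. The two maps are mutually inverse on generators.
-/

open FreeAlgebra in
/-- Relations of `U(q,R)`: with `θ = ι 0`, `x = ι 1`, `y = ι 2`, `z = ι 3` and
`qi` playing the role of `q⁻¹`:
`qxθ − q⁻¹θx = qθy − q⁻¹yθ = [2]_q z − θ`, `θz − zθ = y − x`,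
`qzx − q⁻¹xz = qyz − q⁻¹zy = −z`, `xy + q²z² = yx + q⁻²z²`,
`x + y + (q − q⁻¹)(xy + q²z²) = 0`. -/
inductive URel (R : Type) [CommRing R] (q qi : R) :
    FreeAlgebra R (Fin 4) → FreeAlgebra R (Fin 4) → Prop
  | r1 : URel R q qi (q • (ι R 1 * ι R 0) - qi • (ι R 0 * ι R 1))
      ((q + qi) • ι R 3 - ι R 0)
  | r2 : URel R q qi (q • (ι R 0 * ι R 2) - qi • (ι R 2 * ι R 0))
      ((q + qi) • ι R 3 - ι R 0)
  | r3 : URel R q qi (ι R 0 * ι R 3 - ι R 3 * ι R 0) (ι R 2 - ι R 1)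
  | r4 : URel R q qi (q • (ι R 3 * ι R 1) - qi • (ι R 1 * ι R 3)) (-ι R 3)
  | r5 : URel R q qi (q • (ι R 2 * ι R 3) - qi • (ι R 3 * ι R 2)) (-ι R 3)
  | r6 : URel R q qi (ι R 1 * ι R 2 + (q * q) • (ι R 3 * ι R 3))
      (ι R 2 * ι R 1 + (qi * qi) • (ι R 3 * ι R 3))
  | r7 : URel R q qi
      (ι R 1 + ι R 2 + (q - qi) • (ι R 1 * ι R 2 + (q * q) • (ι R 3 * ι R 3))) 0

section InvOfTwo

variable {R M : Type*} [Semiring R] [Invertible (2 : R)] [AddCommMonoid M] [Module R M] (v : M)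

lemma invOf_two_smul_two_nsmul : (⅟2 : R) • 2 • v = v := by
  rw [two_nsmul, smul_add, invOf_two_smul_add_invOf_two_smul]

lemma two_nsmul_invOf_two_smul : 2 • (⅟2 : R) • v = v := by
  rw [two_nsmul, invOf_two_smul_add_invOf_two_smul]

end InvOfTwo

namespace LieAlgebra.SpecialLinear

variable (R : Type*) [CommRing R]

def sl2H : sl (Fin 2) R := singleSubSingle 0 1 1

def sl2E : sl (Fin 2) R := single 0 1 (by decide) 1

def sl2F : sl (Fin 2) R := single 1 0 (by decide) 1

variable {R}

lemma val_one_one_eq_neg_val_zero_zero (M : sl (Fin 2) R) : M.val 1 1 = -M.val 0 0 := by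
  have h : Matrix.trace M.val = 0 := LinearMap.mem_ker.mp M.2
  rw [Matrix.trace_fin_two] at h
  linear_combination h

lemma sl2_eq_smul_add_smul_add_smul (M : sl (Fin 2) R) :
    M = M.val 0 0 • sl2H R + M.val 0 1 • sl2E R + M.val 1 0 • sl2F R := by
  ext i j
  fin_cases i <;> fin_cases j <;> simp [sl2H, sl2E, sl2F, val_one_one_eq_neg_val_zero_zero]

lemma lie_sl2E_sl2F : ⁅sl2E R, sl2F R⁆ = sl2H R := by
  ext i j
  fin_cases i <;> fin_cases j <;> simp [sl2H, sl2E, sl2F, Ring.lie_def]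

lemma lie_sl2H_sl2E : ⁅sl2H R, sl2E R⁆ = 2 • sl2E R := by
  ext i j
  fin_cases i <;> fin_cases j <;> simp [sl2H, sl2E, Ring.lie_def, Matrix.mul_apply, two_nsmul]

lemma lie_sl2H_sl2F : ⁅sl2H R, sl2F R⁆ = -(2 • sl2F R) := by
  ext i j
  fin_cases i <;> fin_cases j <;>
    simp [sl2H, sl2F, Ring.lie_def, Matrix.mul_apply, two_nsmul, sub_eq_add_neg]

variable {L : Type*} [LieRing L] [LieAlgebra R L]

def sl2LieHom (h e f : L) (hef : ⁅e, f⁆ = h) (hhe : ⁅h, e⁆ = 2 • e)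
    (hhf : ⁅h, f⁆ = -(2 • f)) : sl (Fin 2) R →ₗ⁅R⁆ L where
  toFun M := M.val 0 0 • h + M.val 0 1 • e + M.val 1 0 • f
  map_add' M N := by
    simp only [AddMemClass.coe_add, Matrix.add_apply, add_smul]
    abel
  map_smul' c M := by
    simp only [SetLike.val_smul, Matrix.smul_apply, smul_eq_mul, mul_smul, RingHom.id_apply,
      smul_add]
  map_lie' {M N} := by
    have hfe : ⁅f, e⁆ = -h := by rw [← lie_skew, hef]
    have heh : ⁅e, h⁆ = -(2 • e) := by rw [← lie_skew, hhe]
    have hfh : ⁅f, h⁆ = 2 • f := by rw [← lie_skew, hhf, neg_neg]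
    simp only [sl_bracket, Matrix.sub_apply, Matrix.mul_apply, Fin.sum_univ_two,
      val_one_one_eq_neg_val_zero_zero, add_lie, lie_add, smul_lie, lie_smul, lie_self,
      hef, hhe, hhf, hfe, heh, hfh]
    module

end LieAlgebra.SpecialLinear

open LieAlgebra.SpecialLinear

section Sl2TripleGens

attribute [local instance 100] LieRing.ofAssociativeRing

variable (R : Type) [CommRing R] [Invertible (2 : R)] {A : Type*} [Ring A] [Algebra R A]

def sl2TripleGens (h e f : A) : Fin 4 → A := ![e + f, (⅟2 : R) • h, -((⅟2 : R) • h), e]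

variable {R}

lemma URel.lift_sl2TripleGens_eq {h e f : A}
    (hef : ⁅e, f⁆ = h) (hhe : ⁅h, e⁆ = 2 • e) (hhf : ⁅h, f⁆ = -(2 • f))
    {a b : FreeAlgebra R (Fin 4)} (hab : URel R 1 1 a b) :
    FreeAlgebra.lift R (sl2TripleGens R h e f) a =
      FreeAlgebra.lift R (sl2TripleGens R h e f) b := by
  have hfe : ⁅f, e⁆ = -h := by rw [← lie_skew, hef]
  have heh : ⁅e, h⁆ = -(2 • e) := by rw [← lie_skew, hhe]
  have hfh : ⁅f, h⁆ = 2 • f := by rw [← lie_skew, hhf, neg_neg]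
  cases hab
  case r6 | r7 => simp [sl2TripleGens]
  -- at `q = q⁻¹ = 1` the relations `r1`–`r5` are commutator relations
  all_goals
    simp only [map_sub, map_mul, map_smul, map_neg, FreeAlgebra.lift_ι_apply, sl2TripleGens,
      Matrix.cons_val, one_smul]
    simp only [← Ring.lie_def, lie_add, add_lie, lie_smul (R := R), smul_lie, lie_neg, neg_lie,
      lie_self, hhe, hhf, hfe, heh, hfh]
    match_scalars <;> grind [mul_invOf_self]

end Sl2TripleGens

namespace UOne

attribute [local instance 100] LieRing.ofAssociativeRing

open UniversalEnvelopingAlgebra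

variable (R : Type) [CommRing R]

noncomputable def θ : RingQuot (URel R 1 1) := RingQuot.mkAlgHom R _ (FreeAlgebra.ι R 0)

noncomputable def x : RingQuot (URel R 1 1) := RingQuot.mkAlgHom R _ (FreeAlgebra.ι R 1)

noncomputable def y : RingQuot (URel R 1 1) := RingQuot.mkAlgHom R _ (FreeAlgebra.ι R 2)

noncomputable def z : RingQuot (URel R 1 1) := RingQuot.mkAlgHom R _ (FreeAlgebra.ι R 3)

lemma lie_x_θ : ⁅x R, θ R⁆ = (2 : R) • z R - θ R := by
  simpa [Ring.lie_def, θ, x, z, one_add_one_eq_two] using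
    RingQuot.mkAlgHom_rel R (URel.r1 (R := R) (q := 1) (qi := 1))

lemma lie_θ_z : ⁅θ R, z R⁆ = y R - x R := by
  simpa [Ring.lie_def, θ, x, y, z] using
    RingQuot.mkAlgHom_rel R (URel.r3 (R := R) (q := 1) (qi := 1))

lemma lie_z_x : ⁅z R, x R⁆ = -z R := by
  simpa [Ring.lie_def, x, z] using RingQuot.mkAlgHom_rel R (URel.r4 (R := R) (q := 1) (qi := 1))

lemma y_eq_neg_x : y R = -x R := by
  have h := RingQuot.mkAlgHom_rel R (URel.r7 (R := R) (q := 1) (qi := 1))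
  simp only [sub_self, zero_smul, add_zero, map_add, map_zero] at h
  exact eq_neg_of_add_eq_zero_right h

lemma lie_z_θ_sub_z : ⁅z R, θ R - z R⁆ = 2 • x R := by
  rw [lie_sub, lie_self, sub_zero, ← lie_skew, lie_θ_z, y_eq_neg_x]
  abel

lemma lie_two_nsmul_x_z : ⁅2 • x R, z R⁆ = 2 • z R := by
  rw [nsmul_lie, ← lie_skew, lie_z_x, neg_neg]

lemma lie_two_nsmul_x_θ_sub_z : ⁅2 • x R, θ R - z R⁆ = -(2 • (θ R - z R)) := by
  rw [nsmul_lie, lie_sub, lie_x_θ, ← lie_skew, lie_z_x]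
  module

noncomputable def ofUEA :
    UniversalEnvelopingAlgebra R (sl (Fin 2) R) →ₐ[R] RingQuot (URel R 1 1) :=
  lift R (sl2LieHom (2 • x R) (z R) (θ R - z R)
    (lie_z_θ_sub_z R) (lie_two_nsmul_x_z R) (lie_two_nsmul_x_θ_sub_z R))

lemma ofUEA_ι (M : sl (Fin 2) R) :
    ofUEA R (ι R M) = M.val 0 0 • (2 • x R) + M.val 0 1 • z R + M.val 1 0 • (θ R - z R) :=
  lift_ι_apply R _ M

lemma ofUEA_ι_sl2H : ofUEA R (ι R (sl2H R)) = 2 • x R := by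
  rw [ofUEA_ι]; simp [sl2H]

lemma ofUEA_ι_sl2E : ofUEA R (ι R (sl2E R)) = z R := by
  rw [ofUEA_ι]; simp [sl2E]

lemma ofUEA_ι_sl2F : ofUEA R (ι R (sl2F R)) = θ R - z R := by
  rw [ofUEA_ι]; simp [sl2F]

variable [Invertible (2 : R)]

noncomputable def toUEA :
    RingQuot (URel R 1 1) →ₐ[R] UniversalEnvelopingAlgebra R (sl (Fin 2) R) :=
  RingQuot.liftAlgHom R
    ⟨FreeAlgebra.lift R (sl2TripleGens R (ι R (sl2H R)) (ι R (sl2E R)) (ι R (sl2F R))),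
      fun _ _ ↦ URel.lift_sl2TripleGens_eq
        (by rw [← LieHom.map_lie, lie_sl2E_sl2F])
        (by rw [← LieHom.map_lie, lie_sl2H_sl2E, map_nsmul])
        (by rw [← LieHom.map_lie, lie_sl2H_sl2F, map_neg, map_nsmul])⟩

lemma toUEA_θ : toUEA R (θ R) = ι R (sl2E R) + ι R (sl2F R) := by
  simp [toUEA, θ, sl2TripleGens]

lemma toUEA_x : toUEA R (x R) = (⅟2 : R) • ι R (sl2H R) := by
  simp [toUEA, x, sl2TripleGens]

lemma toUEA_y : toUEA R (y R) = -((⅟2 : R) • ι R (sl2H R)) := by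
  simp [toUEA, y, sl2TripleGens]

lemma toUEA_z : toUEA R (z R) = ι R (sl2E R) := by
  simp [toUEA, z, sl2TripleGens]

lemma ofUEA_comp_toUEA : (ofUEA R).comp (toUEA R) = AlgHom.id R _ := by
  apply RingQuot.ringQuot_ext'
  apply FreeAlgebra.hom_ext
  funext i
  fin_cases i
  · show ofUEA R (toUEA R (θ R)) = θ R
    rw [toUEA_θ, map_add, ofUEA_ι_sl2E, ofUEA_ι_sl2F, add_sub_cancel]
  · show ofUEA R (toUEA R (x R)) = x R
    rw [toUEA_x, map_smul, ofUEA_ι_sl2H, invOf_two_smul_two_nsmul]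
  · show ofUEA R (toUEA R (y R)) = y R
    rw [toUEA_y, map_neg, map_smul, ofUEA_ι_sl2H, invOf_two_smul_two_nsmul, y_eq_neg_x]
  · show ofUEA R (toUEA R (z R)) = z R
    rw [toUEA_z, ofUEA_ι_sl2E]

lemma toUEA_comp_ofUEA : (toUEA R).comp (ofUEA R) = AlgHom.id R _ := by
  ext M
  show toUEA R (ofUEA R (ι R M)) = ι R M
  rw [sl2_eq_smul_add_smul_add_smul M]
  simp only [map_add, map_smul, map_nsmul, map_sub, ofUEA_ι_sl2H, ofUEA_ι_sl2E, ofUEA_ι_sl2F,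
    toUEA_x, toUEA_z, toUEA_θ, two_nsmul_invOf_two_smul, add_sub_cancel_left]

end UOne

/-- for `q = 1`, the algebra `U(1,R)` is isomorphic (as an `R`-algebra)
to the universal enveloping algebra of `sl₂(R)`. -/
theorem stmt5 (R : Type) [CommRing R] (h2 : IsUnit (2 : R)) :
    Nonempty (RingQuot (URel R 1 1) ≃ₐ[R]
      UniversalEnvelopingAlgebra R (LieAlgebra.SpecialLinear.sl (Fin 2) R)) :=
  letI := h2.invertible
  ⟨AlgEquiv.ofAlgHom (UOne.toUEA R) (UOne.ofUEA R) (UOne.toUEA_comp_ofUEA R)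
    (UOne.ofUEA_comp_toUEA R)⟩
end

section
/- In U(q,R) with a = y − x and b = −xy − q^2 z^2, the following identities hold: (q − q^{-1})^2 b^2 − a^2 + 2(q^2 + q^{-2}) z^2 = −4b, and (q − q^{-1})(ab − ba) = 2(q^2 − q^{-2}) z^2. -/
/-! With `b = -xy - q²z²`, the last two relations say `yx = -b - q⁻²z²` and
`x + y = (q - q⁻¹)b`. The first identity is then the expansion of
`(x + y)² - (y - x)² = 2(xy + yx)`. For the second, `x + y` commutes with `b`, so
`ab - ba = 2(yb - by)`, and the `q`-commutation of `y` with `z` gives `yb - by = (q + q⁻¹)z²`. -/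

section QIdentities

variable {R A : Type*} [CommRing R] [Ring A] [Algebra R A] {q qi : R} {x y z b : A}

theorem add_eq_smul_of_add_add_smul_eq_zero (hb : b = -(x * y) - (q * q) • (z * z))
    (h7 : x + y + (q - qi) • (x * y + (q * q) • (z * z)) = 0) :
    x + y = (q - qi) • b := by
  rw [hb, eq_neg_of_add_eq_zero_left h7]
  module

theorem mul_swap_eq_of_qcomm (hb : b = -(x * y) - (q * q) • (z * z))
    (h6 : x * y + (q * q) • (z * z) = y * x + (qi * qi) • (z * z)) :
    y * x = -b - (qi * qi) • (z * z) := by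
  rw [hb, eq_sub_of_add_eq h6.symm]
  module

theorem smul_sq_sub_sq_add_smul_sq_eq (hb : b = -(x * y) - (q * q) • (z * z))
    (h6 : x * y + (q * q) • (z * z) = y * x + (qi * qi) • (z * z))
    (h7 : x + y + (q - qi) • (x * y + (q * q) • (z * z)) = 0) :
    ((q - qi) * (q - qi)) • (b * b) - (y - x) * (y - x)
      + (2 * (q * q + qi * qi)) • (z * z) = -(4 • b) := by
  have hsq : ((q - qi) * (q - qi)) • (b * b) = (x + y) * (x + y) := by
    rw [add_eq_smul_of_add_add_smul_eq_zero hb h7, smul_mul_smul_comm]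
  have hxy : x * y = -b - (q * q) • (z * z) := by rw [hb]; module
  have hdiff : (x + y) * (x + y) - (y - x) * (y - x) = (x * y + y * x) + (x * y + y * x) := by
    simp only [add_mul, mul_add, sub_mul, mul_sub]; abel
  rw [hsq, hdiff, hxy, mul_swap_eq_of_qcomm hb h6, ← Nat.cast_smul_eq_nsmul R]
  module

theorem smul_mul_sq_eq_of_qcomm (hqi : q * qi = 1)
    (h5 : q • (y * z) - qi • (z * y) = -z) :
    (q * q) • (y * (z * z)) = (qi * qi) • (z * z * y) - (q + qi) • (z * z) := by
  have hyz : q • (y * z) = qi • (z * y) - z := by linear_combination (norm := module) h5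
  have hyz' : y * z = (qi * qi) • (z * y) - qi • z := by
    have h := congrArg (qi • ·) hyz
    simp only [smul_smul, mul_comm qi q, hqi, one_smul] at h
    rw [h]
    module
  calc (q * q) • (y * (z * z))
      = q • ((q • (y * z)) * z) := by rw [smul_mul_assoc, smul_smul, mul_assoc]
    _ = (q * qi) • (z * (y * z)) - q • (z * z) := by
        rw [hyz]; simp only [sub_mul, smul_mul_assoc, mul_assoc, smul_sub, smul_smul]
    _ = (qi * qi) • (z * z * y) - (q + qi) • (z * z) := by
        rw [hqi, one_smul, hyz']
        simp only [mul_sub, mul_smul_comm, ← mul_assoc]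
        module

theorem mul_sub_mul_eq_of_qcomm (hqi : q * qi = 1) (hb : b = -(x * y) - (q * q) • (z * z))
    (h5 : q • (y * z) - qi • (z * y) = -z)
    (h6 : x * y + (q * q) • (z * z) = y * x + (qi * qi) • (z * z)) :
    y * b - b * y = (q + qi) • (z * z) := by
  have hyx : y * x - x * y = (q * q - qi * qi) • (z * z) := by
    rw [eq_sub_of_add_eq h6.symm]
    module
  calc y * b - b * y
      = -((y * x - x * y) * y) - ((q * q) • (y * (z * z)) - (q * q) • (z * z * y)) := by
        rw [hb]
        simp only [mul_sub, sub_mul, mul_neg, neg_mul, mul_smul_comm, smul_mul_assoc, mul_assoc]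
        abel
    _ = (q + qi) • (z * z) := by
        rw [hyx, smul_mul_sq_eq_of_qcomm hqi h5, smul_mul_assoc]
        module

theorem smul_commutator_eq_of_qcomm (hqi : q * qi = 1) (hb : b = -(x * y) - (q * q) • (z * z))
    (h5 : q • (y * z) - qi • (z * y) = -z)
    (h6 : x * y + (q * q) • (z * z) = y * x + (qi * qi) • (z * z))
    (h7 : x + y + (q - qi) • (x * y + (q * q) • (z * z)) = 0) :
    (q - qi) • ((y - x) * b - b * (y - x)) = (2 * (q * q - qi * qi)) • (z * z) := by
  have hcomm : (x + y) * b = b * (x + y) := by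
    rw [add_eq_smul_of_add_add_smul_eq_zero hb h7, smul_mul_assoc, mul_smul_comm]
  have hab : (y - x) * b - b * (y - x) = (2 : R) • (y * b - b * y) := by
    have : (y - x) * b - b * (y - x)
        = (2 : R) • (y * b - b * y) - ((x + y) * b - b * (x + y)) := by
      simp only [sub_mul, mul_sub, add_mul, mul_add, two_smul, smul_sub]; abel
    rw [this, hcomm, sub_self, sub_zero]
  rw [hab, mul_sub_mul_eq_of_qcomm hqi hb h5 h6, smul_smul, smul_smul]
  congr 1
  ring

end QIdentities

namespace URel

variable {R : Type} [CommRing R] {q qi : R}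

variable (R q qi) in
abbrev gen (i : Fin 4) : RingQuot (URel R q qi) := RingQuot.mkAlgHom R _ (FreeAlgebra.ι R i)

theorem gen_qcomm_yz :
    q • (gen R q qi 2 * gen R q qi 3) - qi • (gen R q qi 3 * gen R q qi 2) = -gen R q qi 3 := by
  simpa only [map_sub, map_smul, map_mul, map_neg] using
    RingQuot.mkAlgHom_rel R (r5 : URel R q qi _ _)

theorem gen_qcomm_xy :
    gen R q qi 1 * gen R q qi 2 + (q * q) • (gen R q qi 3 * gen R q qi 3)
      = gen R q qi 2 * gen R q qi 1 + (qi * qi) • (gen R q qi 3 * gen R q qi 3) := by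
  simpa only [map_add, map_smul, map_mul] using
    RingQuot.mkAlgHom_rel R (r6 : URel R q qi _ _)

theorem gen_add_add_smul_eq_zero :
    gen R q qi 1 + gen R q qi 2
      + (q - qi) • (gen R q qi 1 * gen R q qi 2 + (q * q) • (gen R q qi 3 * gen R q qi 3))
      = 0 := by
  simpa only [map_add, map_smul, map_mul, map_zero] using
    RingQuot.mkAlgHom_rel R (r7 : URel R q qi _ _)

end URel

theorem stmt7_general (R : Type) [CommRing R]
    (q qi : R) (hqi : q * qi = 1) :
    letI A := RingQuot (URel R q qi)
    letI θ : A := RingQuot.mkAlgHom R _ (FreeAlgebra.ι R 0)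
    letI x : A := RingQuot.mkAlgHom R _ (FreeAlgebra.ι R 1)
    letI y : A := RingQuot.mkAlgHom R _ (FreeAlgebra.ι R 2)
    letI z : A := RingQuot.mkAlgHom R _ (FreeAlgebra.ι R 3)
    letI a : A := y - x
    letI b : A := -(x * y) - (q * q) • (z * z)
    ((q - qi) * (q - qi)) • (b * b) - a * a
        + (2 * (q * q + qi * qi)) • (z * z) = -(4 • b) ∧
    (q - qi) • (a * b - b * a) = (2 * (q * q - qi * qi)) • (z * z) := by
  exact ⟨smul_sq_sub_sq_add_smul_sq_eq rfl URel.gen_qcomm_xy URel.gen_add_add_smul_eq_zero,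
    smul_commutator_eq_of_qcomm hqi rfl URel.gen_qcomm_yz URel.gen_qcomm_xy
      URel.gen_add_add_smul_eq_zero⟩

/-- in `U(q,R)`, with `a = y − x` and `b = −xy − q²z²`:
`(q − q⁻¹)²b² − a² + 2(q² + q⁻²)z² = −4b` and `(q − q⁻¹)(ab − ba) = 2(q² − q⁻²)z²`. -/
theorem stmt7 (R : Type) [CommRing R] (h2 : IsUnit (2 : R))
    (q qi : R) (hqi : q * qi = 1) :
    letI A := RingQuot (URel R q qi)
    letI θ : A := RingQuot.mkAlgHom R _ (FreeAlgebra.ι R 0)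
    letI x : A := RingQuot.mkAlgHom R _ (FreeAlgebra.ι R 1)
    letI y : A := RingQuot.mkAlgHom R _ (FreeAlgebra.ι R 2)
    letI z : A := RingQuot.mkAlgHom R _ (FreeAlgebra.ι R 3)
    letI a : A := y - x
    letI b : A := -(x * y) - (q * q) • (z * z)
    ((q - qi) * (q - qi)) • (b * b) - a * a
        + (2 * (q * q + qi * qi)) • (z * z) = -(4 • b) ∧
    (q - qi) • (a * b - b * a) = (2 * (q * q - qi * qi)) • (z * z) :=
  stmt7_general R q qi hqi
end

section
/- Let q ∈ K× be not a root of unity. In the algebra U_q(g) generated by X, Y, Z, θ with the relations XZ = q^2ZX, ZY = q^2YZ, XY + q^2Z^2 = 1, YX + q^{-2}Z^2 = 1, qXθ − q^{-1}θX = qθY − q^{-1}Yθ = [2]_q Z, θZ − Zθ = Y − X, the element Ω = qX + q^{-1}Y + (q − q^{-1})θZ is central. -/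
/-!
Since `U_q(g)` is generated by `X, Y, Z, θ`, it suffices that `Ω` commutes with each generator.
For a generator `g`, the commutator `Ω g − g Ω` is an explicit combination, with coefficients in
`K` and left or right factors among the generators, of the differences of the two sides of the
defining relations.
-/

open FreeAlgebra in
/-- Relations of `U_q(g)`: with `X = ι 0`, `Y = ι 1`, `Z = ι 2`, `θ = ι 3`:
`XZ = q²ZX`, `ZY = q²YZ`, `XY + q²Z² = 1`, `YX + q⁻²Z² = 1`,
`qXθ − q⁻¹θX = qθY − q⁻¹Yθ = [2]_q Z`, `θZ − Zθ = Y − X`. -/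
inductive GRel (K : Type) [Field K] (q : K) :
    FreeAlgebra K (Fin 4) → FreeAlgebra K (Fin 4) → Prop
  | xz : GRel K q (ι K 0 * ι K 2) (q ^ 2 • (ι K 2 * ι K 0))
  | zy : GRel K q (ι K 2 * ι K 1) (q ^ 2 • (ι K 1 * ι K 2))
  | unit1 : GRel K q (ι K 0 * ι K 1 + q ^ 2 • (ι K 2 * ι K 2)) 1
  | unit2 : GRel K q (ι K 1 * ι K 0 + (q ^ 2)⁻¹ • (ι K 2 * ι K 2)) 1
  | xθ : GRel K q (q • (ι K 0 * ι K 3) - q⁻¹ • (ι K 3 * ι K 0)) ((q + q⁻¹) • ι K 2)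
  | θy : GRel K q (q • (ι K 3 * ι K 1) - q⁻¹ • (ι K 1 * ι K 3)) ((q + q⁻¹) • ι K 2)
  | θz : GRel K q (ι K 3 * ι K 2 - ι K 2 * ι K 3) (ι K 1 - ι K 0)

theorem RingQuot.commute_of_forall_commute_mkAlgHom_ι {R ι : Type*} [CommSemiring R]
    {s : FreeAlgebra R ι → FreeAlgebra R ι → Prop} {a : RingQuot s}
    (h : ∀ i, Commute a (RingQuot.mkAlgHom R s (FreeAlgebra.ι R i))) (u : RingQuot s) :
    Commute a u := by
  obtain ⟨u, rfl⟩ := RingQuot.mkAlgHom_surjective R s u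
  induction u using FreeAlgebra.induction with
  | grade0 r => simpa only [AlgHom.commutes] using Algebra.commute_algebraMap_right r a
  | grade1 i => exact h i
  | mul u v hu hv => simpa only [map_mul] using hu.mul_right hv
  | add u v hu hv => simpa only [map_add] using hu.add_right hv

section Casimir

variable {K A : Type*} [Field K] [Ring A] [Algebra K A] {q : K} {X Y Z θ : A}

def casimir (q : K) (X Y Z θ : A) : A := q • X + q⁻¹ • Y + (q - q⁻¹) • (θ * Z)

theorem casimir_commute_X (hq : q ≠ 0) (hxz : X * Z = q ^ 2 • (Z * X))
    (hxy : X * Y + q ^ 2 • (Z * Z) = 1) (hyx : Y * X + (q ^ 2)⁻¹ • (Z * Z) = 1)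
    (hxθ : q • (X * θ) - q⁻¹ • (θ * X) = (q + q⁻¹) • Z) :
    Commute (casimir q X Y Z θ) X := by
  rw [commute_iff_eq, ← sub_eq_zero]
  calc casimir q X Y Z θ * X - X * casimir q X Y Z θ
      = q⁻¹ • (Y * X + (q ^ 2)⁻¹ • (Z * Z) - 1) - q⁻¹ • (X * Y + q ^ 2 • (Z * Z) - 1)
          - ((q - q⁻¹) * (q ^ 2)⁻¹) • (θ * (X * Z - q ^ 2 • (Z * X)))
          - ((q - q⁻¹) * q⁻¹) • ((q • (X * θ) - q⁻¹ • (θ * X) - (q + q⁻¹) • Z) * Z) := by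
        simp only [casimir, mul_add, add_mul, mul_sub, sub_mul, smul_mul_assoc, mul_smul_comm,
          smul_sub, smul_add, smul_smul, mul_assoc]
        match_scalars <;> field_simp <;> ring
    _ = 0 := by rw [hxz, hxy, hyx, hxθ]; simp

theorem casimir_commute_Y (hq : q ≠ 0) (hzy : Z * Y = q ^ 2 • (Y * Z))
    (hxy : X * Y + q ^ 2 • (Z * Z) = 1) (hyx : Y * X + (q ^ 2)⁻¹ • (Z * Z) = 1)
    (hθy : q • (θ * Y) - q⁻¹ • (Y * θ) = (q + q⁻¹) • Z) :
    Commute (casimir q X Y Z θ) Y := by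
  rw [commute_iff_eq, ← sub_eq_zero]
  calc casimir q X Y Z θ * Y - Y * casimir q X Y Z θ
      = q • (X * Y + q ^ 2 • (Z * Z) - 1) - q • (Y * X + (q ^ 2)⁻¹ • (Z * Z) - 1)
          + (q - q⁻¹) • (θ * (Z * Y - q ^ 2 • (Y * Z)))
          + ((q - q⁻¹) * q) • ((q • (θ * Y) - q⁻¹ • (Y * θ) - (q + q⁻¹) • Z) * Z) := by
        simp only [casimir, mul_add, add_mul, mul_sub, sub_mul, smul_mul_assoc, mul_smul_comm,
          smul_sub, smul_add, smul_smul, mul_assoc]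
        match_scalars <;> field_simp <;> ring
    _ = 0 := by rw [hzy, hxy, hyx, hθy]; simp

theorem casimir_commute_Z (hq : q ≠ 0) (hxz : X * Z = q ^ 2 • (Z * X))
    (hzy : Z * Y = q ^ 2 • (Y * Z)) (hθz : θ * Z - Z * θ = Y - X) :
    Commute (casimir q X Y Z θ) Z := by
  rw [commute_iff_eq, ← sub_eq_zero]
  calc casimir q X Y Z θ * Z - Z * casimir q X Y Z θ
      = q⁻¹ • (X * Z - q ^ 2 • (Z * X)) - q⁻¹ • (Z * Y - q ^ 2 • (Y * Z))
          + (q - q⁻¹) • ((θ * Z - Z * θ - (Y - X)) * Z) := by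
        simp only [casimir, mul_add, add_mul, sub_mul, smul_mul_assoc, mul_smul_comm,
          smul_sub, smul_smul, mul_assoc]
        match_scalars <;> field_simp <;> ring
    _ = 0 := by rw [hxz, hzy, hθz]; simp

theorem casimir_commute_θ (hxθ : q • (X * θ) - q⁻¹ • (θ * X) = (q + q⁻¹) • Z)
    (hθy : q • (θ * Y) - q⁻¹ • (Y * θ) = (q + q⁻¹) • Z) (hθz : θ * Z - Z * θ = Y - X) :
    Commute (casimir q X Y Z θ) θ := by
  rw [commute_iff_eq, ← sub_eq_zero]
  calc casimir q X Y Z θ * θ - θ * casimir q X Y Z θ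
      = (q • (X * θ) - q⁻¹ • (θ * X) - (q + q⁻¹) • Z)
          - (q • (θ * Y) - q⁻¹ • (Y * θ) - (q + q⁻¹) • Z)
          - (q - q⁻¹) • (θ * (θ * Z - Z * θ - (Y - X))) := by
        simp only [casimir, mul_add, add_mul, mul_sub, smul_mul_assoc, mul_smul_comm, smul_sub,
          mul_assoc]
        match_scalars <;> ring
    _ = 0 := by rw [hxθ, hθy, hθz]; simp

end Casimir

namespace GRel

variable {K : Type} [Field K] {q : K}

variable (K q) in
abbrev gen (i : Fin 4) : RingQuot (GRel K q) :=
  RingQuot.mkAlgHom K (GRel K q) (FreeAlgebra.ι K i)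

theorem gen_xz : gen K q 0 * gen K q 2 = q ^ 2 • (gen K q 2 * gen K q 0) := by
  simpa only [map_mul, map_smul] using RingQuot.mkAlgHom_rel K (xz (q := q))

theorem gen_zy : gen K q 2 * gen K q 1 = q ^ 2 • (gen K q 1 * gen K q 2) := by
  simpa only [map_mul, map_smul] using RingQuot.mkAlgHom_rel K (zy (q := q))

theorem gen_unit1 : gen K q 0 * gen K q 1 + q ^ 2 • (gen K q 2 * gen K q 2) = 1 := by
  simpa only [map_mul, map_smul, map_add, map_one] using RingQuot.mkAlgHom_rel K (unit1 (q := q))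

theorem gen_unit2 : gen K q 1 * gen K q 0 + (q ^ 2)⁻¹ • (gen K q 2 * gen K q 2) = 1 := by
  simpa only [map_mul, map_smul, map_add, map_one] using RingQuot.mkAlgHom_rel K (unit2 (q := q))

theorem gen_xθ :
    q • (gen K q 0 * gen K q 3) - q⁻¹ • (gen K q 3 * gen K q 0) = (q + q⁻¹) • gen K q 2 := by
  simpa only [map_mul, map_smul, map_sub] using RingQuot.mkAlgHom_rel K (xθ (q := q))

theorem gen_θy :
    q • (gen K q 3 * gen K q 1) - q⁻¹ • (gen K q 1 * gen K q 3) = (q + q⁻¹) • gen K q 2 := by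
  simpa only [map_mul, map_smul, map_sub] using RingQuot.mkAlgHom_rel K (θy (q := q))

theorem gen_θz : gen K q 3 * gen K q 2 - gen K q 2 * gen K q 3 = gen K q 1 - gen K q 0 := by
  simpa only [map_mul, map_sub] using RingQuot.mkAlgHom_rel K (θz (q := q))

end GRel

open GRel in
theorem stmt8_general (K : Type) [Field K] (q : K) (hq0 : q ≠ 0) :
    letI A := RingQuot (GRel K q)
    letI X : A := RingQuot.mkAlgHom K _ (FreeAlgebra.ι K 0)
    letI Y : A := RingQuot.mkAlgHom K _ (FreeAlgebra.ι K 1)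
    letI Z : A := RingQuot.mkAlgHom K _ (FreeAlgebra.ι K 2)
    letI θ : A := RingQuot.mkAlgHom K _ (FreeAlgebra.ι K 3)
    letI Ω : A := q • X + q⁻¹ • Y + (q - q⁻¹) • (θ * Z)
    ∀ u : A, Ω * u = u * Ω := by
  refine RingQuot.commute_of_forall_commute_mkAlgHom_ι (a := casimir q (gen K q 0) (gen K q 1)
    (gen K q 2) (gen K q 3)) fun i ↦ ?_
  fin_cases i
  · exact casimir_commute_X hq0 gen_xz gen_unit1 gen_unit2 gen_xθ
  · exact casimir_commute_Y hq0 gen_zy gen_unit1 gen_unit2 gen_θy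
  · exact casimir_commute_Z hq0 gen_xz gen_zy gen_θz
  · exact casimir_commute_θ gen_xθ gen_θy gen_θz

/-- the element `Ω = qX + q⁻¹Y + (q − q⁻¹)θZ` is central in `U_q(g)`. -/
theorem stmt8 (K : Type) [Field K] (q : K) (hq0 : q ≠ 0)
    (hq : ∀ n : ℕ, 0 < n → q ^ n ≠ 1) :
    letI A := RingQuot (GRel K q)
    letI X : A := RingQuot.mkAlgHom K _ (FreeAlgebra.ι K 0)
    letI Y : A := RingQuot.mkAlgHom K _ (FreeAlgebra.ι K 1)
    letI Z : A := RingQuot.mkAlgHom K _ (FreeAlgebra.ι K 2)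
    letI θ : A := RingQuot.mkAlgHom K _ (FreeAlgebra.ι K 3)
    letI Ω : A := q • X + q⁻¹ • Y + (q - q⁻¹) • (θ * Z)
    ∀ u : A, Ω * u = u * Ω :=
  stmt8_general K q hq0
end

section
/- For q ∈ K× not a root of unity and n ∈ ℤ, define T_n^± = q^{±n} X − q^{∓n} Y ∓ [2]_q Z and T_n = q^{-1} X + q Y + (q^n − q^{-n}) Z in U_q(g). Then T_{n+2}^- T_n^+ = T_n^2 − (q^{n+1} + q^{-n-1})^2 and T_{n-2}^+ T_n^- = T_n^2 − (q^{n-1} + q^{-n+1})^2. -/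
structure UqRelations {K A : Type*} [Field K] [Ring A] [Algebra K A] (q : K) (X Y Z : A) :
    Prop where
  xz : X * Z = q ^ 2 • (Z * X)
  zy : Z * Y = q ^ 2 • (Y * Z)
  xy : X * Y + q ^ 2 • (Z * Z) = 1
  yx : Y * X + (q ^ 2)⁻¹ • (Z * Z) = 1

namespace UqRelations

variable {K A : Type*} [Field K] [Ring A] [Algebra K A] {q : K} {X Y Z : A}

theorem linearForm_mul_linearForm (h : UqRelations q X Y Z) (a b c a' b' c' : K) :
    (a • X + b • Y + c • Z) * (a' • X + b' • Y + c' • Z) =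
      (a * b' + b * a') • 1 + (a * a') • (X * X) + (b * b') • (Y * Y)
        + (c * c' - q ^ 2 * a * b' - (q ^ 2)⁻¹ * b * a') • (Z * Z)
        + (q ^ 2 * a * c' + c * a') • (Z * X) + (b * c' + q ^ 2 * c * b') • (Y * Z) := by
  have hxy : X * Y = 1 - q ^ 2 • (Z * Z) := eq_sub_of_add_eq h.xy
  have hyx : Y * X = 1 - (q ^ 2)⁻¹ • (Z * Z) := eq_sub_of_add_eq h.yx
  simp only [add_mul, mul_add, smul_mul_smul_comm, h.xz, h.zy, hxy, hyx]
  module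

variable (q X Y Z) in
def tPlus (m : ℤ) : A := q ^ m • X - q ^ (-m) • Y - (q + q⁻¹) • Z

variable (q X Y Z) in
def tMinus (m : ℤ) : A := q ^ (-m) • X - q ^ m • Y + (q + q⁻¹) • Z

variable (q X Y Z) in
def tMid (m : ℤ) : A := q⁻¹ • X + q • Y + (q ^ m - q ^ (-m)) • Z

theorem tMinus_mul_tPlus (h : UqRelations q X Y Z) (hq : q ≠ 0) (n : ℤ) :
    tMinus q X Y Z (n + 2) * tPlus q X Y Z n =
      tMid q X Y Z n ^ 2 - algebraMap K A ((q ^ (n + 1) + q ^ (-(n + 1))) ^ 2) := by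
  simp only [tPlus, tMinus, tMid, sub_eq_add_neg, ← neg_smul, sq, h.linearForm_mul_linearForm,
    Algebra.algebraMap_eq_smul_one]
  match_scalars <;> simp only [zpow_add₀ hq, zpow_neg] <;> field_simp <;> ring

theorem tPlus_mul_tMinus (h : UqRelations q X Y Z) (hq : q ≠ 0) (n : ℤ) :
    tPlus q X Y Z (n - 2) * tMinus q X Y Z n =
      tMid q X Y Z n ^ 2 - algebraMap K A ((q ^ (n - 1) + q ^ (-(n - 1))) ^ 2) := by
  simp only [tPlus, tMinus, tMid, sub_eq_add_neg, ← neg_smul, sq, h.linearForm_mul_linearForm,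
    Algebra.algebraMap_eq_smul_one]
  match_scalars <;> simp only [zpow_add₀ hq, zpow_neg] <;> field_simp <;> ring

end UqRelations

theorem uqRelations_gRel (K : Type) [Field K] (q : K) :
    UqRelations q (RingQuot.mkAlgHom K (GRel K q) (FreeAlgebra.ι K 0))
      (RingQuot.mkAlgHom K (GRel K q) (FreeAlgebra.ι K 1))
      (RingQuot.mkAlgHom K (GRel K q) (FreeAlgebra.ι K 2)) := by
  have rel {a b} (r : GRel K q a b) := RingQuot.mkAlgHom_rel K r
  constructor
  · simpa only [map_mul, map_smul] using rel .xz
  · simpa only [map_mul, map_smul] using rel .zy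
  · simpa only [map_mul, map_add, map_smul, map_one] using rel .unit1
  · simpa only [map_mul, map_add, map_smul, map_one] using rel .unit2

theorem stmt10_general (K : Type) [Field K] (q : K) (hq0 : q ≠ 0) (n : ℤ) :
    letI A := RingQuot (GRel K q)
    letI X : A := RingQuot.mkAlgHom K _ (FreeAlgebra.ι K 0)
    letI Y : A := RingQuot.mkAlgHom K _ (FreeAlgebra.ι K 1)
    letI Z : A := RingQuot.mkAlgHom K _ (FreeAlgebra.ι K 2)
    letI Tp : ℤ → A := fun m => q ^ m • X - q ^ (-m) • Y - (q + q⁻¹) • Z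
    letI Tm : ℤ → A := fun m => q ^ (-m) • X - q ^ m • Y + (q + q⁻¹) • Z
    letI T : ℤ → A := fun m => q⁻¹ • X + q • Y + (q ^ m - q ^ (-m)) • Z
    Tm (n + 2) * Tp n = T n ^ 2 - algebraMap K A ((q ^ (n + 1) + q ^ (-(n + 1))) ^ 2) ∧
    Tp (n - 2) * Tm n = T n ^ 2 - algebraMap K A ((q ^ (n - 1) + q ^ (-(n - 1))) ^ 2) :=
  ⟨(uqRelations_gRel K q).tMinus_mul_tPlus hq0 n, (uqRelations_gRel K q).tPlus_mul_tMinus hq0 n⟩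

/-- with `T_n^± = q^{±n}X − q^{∓n}Y ∓ [2]_q Z` and
`T_n = q⁻¹X + qY + (q^n − q^{-n})Z`, one has
`T_{n+2}^- T_n^+ = T_n² − {n+1}_q²` and `T_{n-2}^+ T_n^- = T_n² − {n-1}_q²`,
where `{m}_q = q^m + q^{-m}`. -/
theorem stmt10 (K : Type) [Field K] (q : K) (hq0 : q ≠ 0)
    (hq : ∀ n : ℕ, 0 < n → q ^ n ≠ 1) (n : ℤ) :
    letI A := RingQuot (GRel K q)
    letI X : A := RingQuot.mkAlgHom K _ (FreeAlgebra.ι K 0)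
    letI Y : A := RingQuot.mkAlgHom K _ (FreeAlgebra.ι K 1)
    letI Z : A := RingQuot.mkAlgHom K _ (FreeAlgebra.ι K 2)
    letI Tp : ℤ → A := fun m => q ^ m • X - q ^ (-m) • Y - (q + q⁻¹) • Z
    letI Tm : ℤ → A := fun m => q ^ (-m) • X - q ^ m • Y + (q + q⁻¹) • Z
    letI T : ℤ → A := fun m => q⁻¹ • X + q • Y + (q ^ m - q ^ (-m)) • Z
    Tm (n + 2) * Tp n = T n ^ 2 - algebraMap K A ((q ^ (n + 1) + q ^ (-(n + 1))) ^ 2) ∧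
    Tp (n - 2) * Tm n = T n ^ 2 - algebraMap K A ((q ^ (n - 1) + q ^ (-(n - 1))) ^ 2) :=
  stmt10_general K q hq0 n
end

section
/- Let R be an algebra over K generated by a central involution m (m^2 = 1) together with elements X, Y, Z satisfying XZ = q^2ZX, ZY = q^2YZ, XY + q^2Z^2 = 1, YX + q^{-2}Z^2 = 1 (q not a root of unity, all commuting with m). Then the K-algebra characters of R on which Z acts by 0 are exactly the χ_{ε,λ} for ε ∈ {−1,1}, λ ∈ K×, determined by χ(m) = ε, χ(X) = λ, χ(Y) = λ^{-1}, χ(Z) = 0; moreover every character of R sends Z to 0. -/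
open FreeAlgebra in
/-- Relations of `R_q(p,M)`: with `m = ι 0`, `X = ι 1`, `Y = ι 2`, `Z = ι 3`:
`m² = 1`, `m` commutes with `X, Y, Z`, and
`XZ = q²ZX`, `ZY = q²YZ`, `XY + q²Z² = 1`, `YX + q⁻²Z² = 1`. -/
inductive PRel (K : Type) [Field K] (q : K) :
    FreeAlgebra K (Fin 4) → FreeAlgebra K (Fin 4) → Prop
  | m2 : PRel K q (ι K 0 * ι K 0) 1
  | mX : PRel K q (ι K 0 * ι K 1) (ι K 1 * ι K 0)
  | mY : PRel K q (ι K 0 * ι K 2) (ι K 2 * ι K 0)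
  | mZ : PRel K q (ι K 0 * ι K 3) (ι K 3 * ι K 0)
  | xz : PRel K q (ι K 1 * ι K 3) (q ^ 2 • (ι K 3 * ι K 1))
  | zy : PRel K q (ι K 3 * ι K 2) (q ^ 2 • (ι K 2 * ι K 3))
  | unit1 : PRel K q (ι K 1 * ι K 2 + q ^ 2 • (ι K 3 * ι K 3)) 1
  | unit2 : PRel K q (ι K 2 * ι K 1 + (q ^ 2)⁻¹ • (ι K 3 * ι K 3)) 1

/-! Subtracting the two relations `XY + q²Z² = 1` and `YX + q⁻²Z² = 1` in a commutative target gives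
`(q² - q⁻²) χ(Z)² = 0`, and `q² ≠ q⁻²` because `q⁴ ≠ 1`; hence `χ(Z) = 0`, so `χ(X)χ(Y) = 1`, and
`χ(m)² = 1`. Conversely, once `Z ↦ 0` every relation holds for `m ↦ ε, X ↦ λ, Y ↦ λ⁻¹`, and a character
is determined by its values on the generators. -/

namespace PRel

section Generators

variable (K : Type) [Field K] (q : K)

abbrev m : RingQuot (PRel K q) := RingQuot.mkAlgHom K _ (FreeAlgebra.ι K 0)
abbrev X : RingQuot (PRel K q) := RingQuot.mkAlgHom K _ (FreeAlgebra.ι K 1)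
abbrev Y : RingQuot (PRel K q) := RingQuot.mkAlgHom K _ (FreeAlgebra.ι K 2)
abbrev Z : RingQuot (PRel K q) := RingQuot.mkAlgHom K _ (FreeAlgebra.ι K 3)

theorem m_mul_m : m K q * m K q = 1 := by
  simpa using RingQuot.mkAlgHom_rel K (PRel.m2 (q := q))

theorem X_mul_Y_add : X K q * Y K q + q ^ 2 • (Z K q * Z K q) = 1 := by
  simpa using RingQuot.mkAlgHom_rel K (PRel.unit1 (q := q))

theorem Y_mul_X_add : Y K q * X K q + (q ^ 2)⁻¹ • (Z K q * Z K q) = 1 := by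
  simpa using RingQuot.mkAlgHom_rel K (PRel.unit2 (q := q))

end Generators

variable {K : Type} [Field K] {q : K}

theorem algHom_ext {B : Type*} [Semiring B] [Algebra K B] {f g : RingQuot (PRel K q) →ₐ[K] B}
    (hm : f (m K q) = g (m K q)) (hX : f (X K q) = g (X K q)) (hY : f (Y K q) = g (Y K q))
    (hZ : f (Z K q) = g (Z K q)) : f = g := by
  refine RingQuot.ringQuot_ext' K f g (FreeAlgebra.hom_ext (funext fun i => ?_))
  fin_cases i
  exacts [hm, hX, hY, hZ]

section Characters

variable {B : Type*} [CommRing B] [Algebra K B] (χ : RingQuot (PRel K q) →ₐ[K] B)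

theorem map_m_mul_self : χ (m K q) * χ (m K q) = 1 := by
  simpa using congrArg χ (m_mul_m K q)

theorem map_Z_eq_zero [IsReduced B] (hq0 : q ≠ 0) (hq4 : q ^ 4 ≠ 1) : χ (Z K q) = 0 := by
  have h1 := congrArg χ (X_mul_Y_add K q)
  have h2 := congrArg χ (Y_mul_X_add K q)
  simp only [map_add, map_mul, map_smul, map_one] at h1 h2
  have hdiff : (q ^ 2 - (q ^ 2)⁻¹) • (χ (Z K q) * χ (Z K q)) = 0 := by
    rw [sub_smul]
    linear_combination h1 - h2
  have hcoeff : q ^ 2 - (q ^ 2)⁻¹ ≠ 0 := by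
    rw [sub_ne_zero, Ne, ← mul_eq_one_iff_eq_inv₀ (pow_ne_zero 2 hq0), ← pow_add]
    exact hq4
  have hsq : χ (Z K q) * χ (Z K q) = 0 := (smul_eq_zero.mp hdiff).resolve_left hcoeff
  exact IsReduced.eq_zero _ ⟨2, by rwa [sq]⟩

theorem map_X_mul_map_Y [IsReduced B] (hq0 : q ≠ 0) (hq4 : q ^ 4 ≠ 1) :
    χ (X K q) * χ (Y K q) = 1 := by
  simpa [map_Z_eq_zero χ hq0 hq4] using congrArg χ (X_mul_Y_add K q)

end Characters

variable {B : Type*} [CommSemiring B] [Algebra K B]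

def character (ε x y : B) (hε : ε * ε = 1) (hxy : x * y = 1) :
    RingQuot (PRel K q) →ₐ[K] B :=
  RingQuot.liftAlgHom K ⟨FreeAlgebra.lift K ![ε, x, y, 0], fun _ _ h => by
    cases h <;> simp [hε, hxy, mul_comm y x, mul_comm ε]⟩

@[simp]
theorem character_apply_ι (ε x y : B) (hε : ε * ε = 1) (hxy : x * y = 1) (i : Fin 4) :
    character (q := q) ε x y hε hxy (RingQuot.mkAlgHom K _ (FreeAlgebra.ι K i)) =
      ![ε, x, y, 0] i := by
  simp [character]

end PRel

open PRel in
/-- every `K`-algebra character `χ` of `R_q(p,M)` satisfies `χ(Z) = 0`,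
`χ(m) = ±1`, `χ(X)` invertible with `χ(Y) = χ(X)⁻¹`; conversely, for every
`ε ∈ {−1,1}` and `λ ∈ K×`, there is a unique character `χ_{ε,λ}` with
`χ(m) = ε`, `χ(X) = λ`, `χ(Y) = λ⁻¹`, `χ(Z) = 0`. -/
theorem stmt13 (K : Type) [Field K] (q : K) (hq0 : q ≠ 0)
    (hq : ∀ n : ℕ, 0 < n → q ^ n ≠ 1) :
    letI A := RingQuot (PRel K q)
    letI m : A := RingQuot.mkAlgHom K _ (FreeAlgebra.ι K 0)
    letI X : A := RingQuot.mkAlgHom K _ (FreeAlgebra.ι K 1)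
    letI Y : A := RingQuot.mkAlgHom K _ (FreeAlgebra.ι K 2)
    letI Z : A := RingQuot.mkAlgHom K _ (FreeAlgebra.ι K 3)
    (∀ χ : A →ₐ[K] K,
      χ Z = 0 ∧ (χ m = 1 ∨ χ m = -1) ∧ χ X ≠ 0 ∧ χ Y = (χ X)⁻¹) ∧
    (∀ ε lam : K, (ε = 1 ∨ ε = -1) → lam ≠ 0 →
      ∃! χ : A →ₐ[K] K, χ m = ε ∧ χ X = lam ∧ χ Y = lam⁻¹ ∧ χ Z = 0) := by
  have hq4 : q ^ 4 ≠ 1 := hq 4 (by norm_num)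
  refine ⟨fun χ => ?_, fun ε lam hε hlam => ?_⟩
  · have hXY := map_X_mul_map_Y χ hq0 hq4
    exact ⟨map_Z_eq_zero χ hq0 hq4, mul_self_eq_one_iff.mp (map_m_mul_self χ),
      left_ne_zero_of_mul_eq_one hXY, eq_inv_of_mul_eq_one_right hXY⟩
  · have hε' : ε * ε = 1 := mul_self_eq_one_iff.mpr hε
    refine ⟨character ε lam lam⁻¹ hε' (mul_inv_cancel₀ hlam), by simp, ?_⟩
    rintro χ ⟨hm, hX, hY, hZ⟩
    exact algHom_ext (by simpa using hm) (by simpa using hX) (by simpa using hY) (by simpa using hZ)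
end

section
/- Let q ∈ ℂ× with q not a root of unity, ε ∈ {−1,1}, and λ ∈ ℂ× such that λ ∉ { σ q^n : σ = ±1, n ∈ ℤ, (−1)^{n+1} = ε }. Then for every n in Z^ε the coefficients λ q^{1+n} − λ^{-1} q^{-1-n} and λ q^{1−n} − λ^{-1} q^{-1+n} are nonzero, and consequently the module Ind_q(ε,λ) described by the action θζ_n = [n]_q ζ_n, T_n^± ζ_n = (λ q^{1±n} − λ^{-1}q^{-1∓n}) ζ_{n±2} has no nonzero proper invariant subspace spanned by a subset of the basis (ζ_n)_{n ∈ Z^ε}. -/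
lemma aux0 (a lam : ℂ) (ha : a ≠ 0) (hl : lam ≠ 0)
    (h : lam * a - lam⁻¹ * a⁻¹ = 0) : lam = a⁻¹ ∨ lam = -a⁻¹ := by
  have h' : lam * a = lam⁻¹ * a⁻¹ := sub_eq_zero.mp h
  have h1 : (lam * a) * (lam⁻¹ * a⁻¹) = 1 := by field_simp
  have h2 : (lam * a) * (lam * a) = 1 := by
    calc (lam * a) * (lam * a) = (lam * a) * (lam⁻¹ * a⁻¹) := by rw [← h']
    _ = 1 := h1
  rcases mul_self_eq_one_iff.mp h2 with h3 | h3
  · left; exact eq_inv_of_mul_eq_one_left h3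
  · right
    have h4 : (lam + a⁻¹) * a = 0 := by
      rw [add_mul, h3, inv_mul_cancel₀ ha]; ring
    exact eq_neg_of_add_eq_zero_left ((mul_eq_zero.mp h4).resolve_right ha)

/-- with the same compact-picture setup as for `Ind_q(ε,λ)` over `ℂ`
(basis `ζ_n = e k`, `n = 2k + δ`, `δ = 0` if `ε = 1`, `δ = 1` if `ε = −1`),
if `λ` is not of the form `σ q^n` with `σ = ±1` and `(−1)^{n+1} = ε`, then all
transition coefficients `λq^{1±n} − λ⁻¹q^{-1∓n}` are nonzero and every invariant
subspace spanned by a subset of the basis is `⊥` or `⊤`. -/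
theorem stmt15 (q : ℂ) (hq0 : q ≠ 0) (hq : ∀ n : ℕ, 0 < n → q ^ n ≠ 1)
    (ε : ℤ) (hε : ε = 1 ∨ ε = -1) (lam : ℂ) (hlam0 : lam ≠ 0)
    (hlam : ∀ n : ℤ, ((ε = 1 ∧ Odd n) ∨ (ε = -1 ∧ Even n)) →
      lam ≠ q ^ n ∧ lam ≠ -q ^ n)
    (δ : ℤ) (hδ : δ = if ε = 1 then 0 else 1)
    (e : ℤ → (ℤ →₀ ℂ)) (he : ∀ k, e k = Finsupp.single k 1)
    (Xop Yop Zop θop : (ℤ →₀ ℂ) →ₗ[ℂ] (ℤ →₀ ℂ))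
    (hθ : ∀ k : ℤ, θop (e k) =
      ((q ^ (2 * k + δ) - q ^ (-(2 * k + δ))) / (q - q⁻¹)) • e k)
    (hTp : ∀ k : ℤ,
      q ^ (2 * k + δ) • Xop (e k) - q ^ (-(2 * k + δ)) • Yop (e k)
          - (q + q⁻¹) • Zop (e k)
        = (lam * q ^ (1 + (2 * k + δ)) - lam⁻¹ * q ^ (-1 - (2 * k + δ))) • e (k + 1))
    (hTm : ∀ k : ℤ,
      q ^ (-(2 * k + δ)) • Xop (e k) - q ^ (2 * k + δ) • Yop (e k)
          + (q + q⁻¹) • Zop (e k)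
        = (lam * q ^ (1 - (2 * k + δ)) - lam⁻¹ * q ^ (-1 + (2 * k + δ))) • e (k - 1))
    (hT : ∀ k : ℤ,
      q⁻¹ • Xop (e k) + q • Yop (e k)
          + (q ^ (2 * k + δ) - q ^ (-(2 * k + δ))) • Zop (e k)
        = (lam + lam⁻¹) • e k) :
    (∀ k : ℤ,
      lam * q ^ (1 + (2 * k + δ)) - lam⁻¹ * q ^ (-1 - (2 * k + δ)) ≠ 0 ∧
      lam * q ^ (1 - (2 * k + δ)) - lam⁻¹ * q ^ (-1 + (2 * k + δ)) ≠ 0) ∧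
    (∀ Λ : Set ℤ,
      (∀ w ∈ Submodule.span ℂ (e '' Λ),
        Xop w ∈ Submodule.span ℂ (e '' Λ) ∧ Yop w ∈ Submodule.span ℂ (e '' Λ) ∧
        Zop w ∈ Submodule.span ℂ (e '' Λ) ∧ θop w ∈ Submodule.span ℂ (e '' Λ)) →
      Submodule.span ℂ (e '' Λ) = ⊥ ∨ Submodule.span ℂ (e '' Λ) = ⊤) := by
  have hpar : ∀ m : ℤ, Odd (m - δ) →
      ((ε = 1 ∧ Odd m) ∨ (ε = -1 ∧ Even m)) := by
    intro m hm
    rcases hε with h1 | h1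
    · left
      refine ⟨h1, ?_⟩
      rw [h1] at hδ; simp at hδ
      rwa [hδ, sub_zero] at hm
    · right
      refine ⟨h1, ?_⟩
      rw [h1] at hδ; norm_num at hδ
      subst hδ
      rcases hm with ⟨j, hj⟩
      exact ⟨j + 1, by omega⟩
  have hcoef : ∀ k : ℤ,
      lam * q ^ (1 + (2 * k + δ)) - lam⁻¹ * q ^ (-1 - (2 * k + δ)) ≠ 0 ∧
      lam * q ^ (1 - (2 * k + δ)) - lam⁻¹ * q ^ (-1 + (2 * k + δ)) ≠ 0 := by
    intro k
    constructor
    · intro h0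
      rw [show (-1 - (2 * k + δ) : ℤ) = -(1 + (2 * k + δ)) by ring, zpow_neg] at h0
      rcases aux0 (q ^ (1 + (2 * k + δ))) lam (zpow_ne_zero _ hq0) hlam0 h0 with h | h
      · exact (hlam (-(1 + (2 * k + δ))) (hpar _ ⟨-1 - k - δ, by ring⟩)).1
          (by rw [h, ← zpow_neg])
      · exact (hlam (-(1 + (2 * k + δ))) (hpar _ ⟨-1 - k - δ, by ring⟩)).2
          (by rw [h, ← zpow_neg])
    · intro h0
      rw [show (-1 + (2 * k + δ) : ℤ) = -(1 - (2 * k + δ)) by ring, zpow_neg] at h0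
      rcases aux0 (q ^ (1 - (2 * k + δ))) lam (zpow_ne_zero _ hq0) hlam0 h0 with h | h
      · exact (hlam (-(1 - (2 * k + δ))) (hpar _ ⟨k - 1, by ring⟩)).1
          (by rw [h, ← zpow_neg])
      · exact (hlam (-(1 - (2 * k + δ))) (hpar _ ⟨k - 1, by ring⟩)).2
          (by rw [h, ← zpow_neg])
  refine ⟨hcoef, ?_⟩
  intro Λ hinv
  set S := Submodule.span ℂ (e '' Λ) with hS
  by_cases hΛ : Λ = ∅
  · left; rw [hS, hΛ]; simp
  · right
    obtain ⟨k0, hk0⟩ := Set.nonempty_iff_ne_empty.mpr hΛ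
    have up : ∀ k : ℤ, e k ∈ S → e (k + 1) ∈ S := by
      intro k hk
      obtain ⟨hX, hY, hZ, -⟩ := hinv (e k) hk
      have h1 : (lam * q ^ (1 + (2 * k + δ)) - lam⁻¹ * q ^ (-1 - (2 * k + δ))) • e (k + 1) ∈ S := by
        rw [← hTp k]
        exact Submodule.sub_mem _ (Submodule.sub_mem _ (Submodule.smul_mem _ _ hX)
          (Submodule.smul_mem _ _ hY)) (Submodule.smul_mem _ _ hZ)
      have h2 := Submodule.smul_mem S
        (lam * q ^ (1 + (2 * k + δ)) - lam⁻¹ * q ^ (-1 - (2 * k + δ)))⁻¹ h1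
      rwa [smul_smul, inv_mul_cancel₀ (hcoef k).1, one_smul] at h2
    have down : ∀ k : ℤ, e k ∈ S → e (k - 1) ∈ S := by
      intro k hk
      obtain ⟨hX, hY, hZ, -⟩ := hinv (e k) hk
      have h1 : (lam * q ^ (1 - (2 * k + δ)) - lam⁻¹ * q ^ (-1 + (2 * k + δ))) • e (k - 1) ∈ S := by
        rw [← hTm k]
        exact Submodule.add_mem _ (Submodule.sub_mem _ (Submodule.smul_mem _ _ hX)
          (Submodule.smul_mem _ _ hY)) (Submodule.smul_mem _ _ hZ)
      have h2 := Submodule.smul_mem S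
        (lam * q ^ (1 - (2 * k + δ)) - lam⁻¹ * q ^ (-1 + (2 * k + δ)))⁻¹ h1
      rwa [smul_smul, inv_mul_cancel₀ (hcoef k).2, one_smul] at h2
    have base : e k0 ∈ S := Submodule.subset_span ⟨k0, hk0, rfl⟩
    have hmem : ∀ m : ℤ, e m ∈ S := fun m =>
      Int.inductionOn' m k0 base (fun k _ h => up k h) (fun k _ h => down k h)
    refine eq_top_iff.mpr ?_
    calc (⊤ : Submodule ℂ (ℤ →₀ ℂ)) = Finsupp.supported ℂ ℂ Set.univ := by
          rw [Finsupp.supported_univ]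
      _ = Submodule.span ℂ ((fun i => Finsupp.single i 1) '' Set.univ) :=
          Finsupp.supported_eq_span_single ℂ _
      _ ≤ S := Submodule.span_le.mpr (by rintro _ ⟨i, -, rfl⟩; show Finsupp.single i 1 ∈ S; rw [← he i]; exact hmem i)
end
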